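/- Let p be a prime and M ≥ 1 an integer. Then the Serganova map S₁ restricts to a bijection from the set A of dominant pairs onto the set 𝕄, with inverse given by the restriction of T₁ to 𝕄. -/

import Mathlib

open Function

/-- The state of the Serganova algorithm: a pair `(λ, θ) ∈ ℤ^M × ℤ^{M+1}`.
Indices are 0-based, so the paper's `λ_i` (for `1 ≤ i ≤ M`) is `s.1 ⟨i-1,_⟩`
and the paper's `θ_j` (for `1 ≤ j ≤ M+1`) is `s.2 ⟨j-1,_⟩`. -/
abbrev SState (M : ℕ) := (Fin M → ℤ) × (Fin (M + 1) → ℤ)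

/-- One step of the Serganova algorithm, processing the (0-based) pair `(i, j)`:
if `λ_i + θ_j ≡ 0 (mod p)` nothing changes, otherwise `λ_i` is decreased by `1`
and `θ_j` is increased by `1`. -/
def sStep (p M : ℕ) (ij : Fin M × Fin (M + 1)) (s : SState M) : SState M :=
  if (p : ℤ) ∣ s.1 ij.1 + s.2 ij.2 then s
  else (Function.update s.1 ij.1 (s.1 ij.1 - 1),
        Function.update s.2 ij.2 (s.2 ij.2 + 1))

/-- One step of the inverse algorithm, processing the (0-based) pair `(i, j)`:
if `λ_i + θ_j ≡ 0 (mod p)` nothing changes, otherwise `λ_i` is increased by `1`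
and `θ_j` is decreased by `1`. -/
def tStep (p M : ℕ) (ij : Fin M × Fin (M + 1)) (s : SState M) : SState M :=
  if (p : ℤ) ∣ s.1 ij.1 + s.2 ij.2 then s
  else (Function.update s.1 ij.1 (s.1 ij.1 + 1),
        Function.update s.2 ij.2 (s.2 ij.2 - 1))

/-- Run the Serganova algorithm along a list of pairs. -/
def sRun (p M : ℕ) (l : List (Fin M × Fin (M + 1))) (s : SState M) : SState M :=
  l.foldl (fun s ij => sStep p M ij s) s

/-- Run the inverse algorithm along a list of pairs. -/
def tRun (p M : ℕ) (l : List (Fin M × Fin (M + 1))) (s : SState M) : SState M :=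
  l.foldl (fun s ij => tStep p M ij s) s

/-- The Version 1 order on the pair set `P = {(i,j) : 0 ≤ j ≤ i ≤ M-1}` (0-based):
`j` increasing, and for fixed `j`, `i` decreasing from `M-1` down to `j`.
This is the paper's order `(M,1),(M-1,1),…,(1,1),(M,2),…,(2,2),…,(M,M)`. -/
def order1 (M : ℕ) : List (Fin M × Fin (M + 1)) :=
  (List.finRange M).flatMap fun j =>
    ((List.finRange M).reverse.filter fun i => j ≤ i).map fun i => (i, j.castSucc)

/-- The Version 2 order on the pair set `P` (0-based):
`i` decreasing from `M-1` down to `0`, and for fixed `i`, `j` increasing from `0` to `i`.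
This is the paper's order `(M,1),(M,2),…,(M,M),(M-1,1),…,(M-1,M-1),…,(1,1)`. -/
def order2 (M : ℕ) : List (Fin M × Fin (M + 1)) :=
  (List.finRange M).reverse.flatMap fun i =>
    ((List.finRange M).filter fun j => j ≤ i).map fun j => (i, j.castSucc)

/-- The Serganova map `S₁` (Version 1 order). -/
def S1 (p M : ℕ) (s : SState M) : SState M := sRun p M (order1 M) s

/-- The Serganova map `S₂` (Version 2 order). -/
def S2 (p M : ℕ) (s : SState M) : SState M := sRun p M (order2 M) s

/-- The inverse algorithm `T₁`: inverse steps, pairs processed in reverse Version 1 order. -/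
def T1 (p M : ℕ) (s : SState M) : SState M := tRun p M (order1 M).reverse s

/-- The inverse algorithm `T₂`: inverse steps, pairs processed in reverse Version 2 order. -/
def T2 (p M : ℕ) (s : SState M) : SState M := tRun p M (order2 M).reverse s

/-- The set `A` of dominant pairs: `λ_1 ≥ … ≥ λ_M` and `θ_1 ≥ … ≥ θ_{M+1}`. -/
def domA (M : ℕ) : Set (SState M) := {s | Antitone s.1 ∧ Antitone s.2}

/-- The set `𝕄`: dominant pairs such that (in 1-based terms) for `2 ≤ i ≤ M`,
`λ_{i-1} = λ_i → p ∣ λ_i + θ_i`, and for `1 ≤ i ≤ M`, `θ_i = θ_{i+1} → p ∣ λ_i + θ_i`. -/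
def setM (p M : ℕ) : Set (SState M) :=
  {s | Antitone s.1 ∧ Antitone s.2 ∧
    (∀ (i : ℕ) (hi : i + 1 < M),
      s.1 ⟨i, by omega⟩ = s.1 ⟨i + 1, hi⟩ →
        (p : ℤ) ∣ s.1 ⟨i + 1, hi⟩ + s.2 ⟨i + 1, by omega⟩) ∧
    (∀ (i : ℕ) (hi : i < M),
      s.2 ⟨i, by omega⟩ = s.2 ⟨i + 1, by omega⟩ →
        (p : ℤ) ∣ s.1 ⟨i, hi⟩ + s.2 ⟨i, by omega⟩)}

/-!
Each step of `T₁` undoes the corresponding step of `S₁`, so `T₁` and `S₁` are mutually inverse on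
all of `ℤ^M × ℤ^{M+1}`, and it remains to show `S₁(A) ⊆ 𝕄` and `T₁(𝕄) ⊆ A`. In the Version 1
order, `S₁` first sweeps a counter starting at `θ₁` through `λ_M, …, λ₁` and then runs `S₁` of
size `M - 1` on the rows below; `T₁` does the reverse. Both inclusions follow by induction on `M`,
looking only at the first two rows. A sweep keeps the `λ`'s ordered, and the final counters of
an `S`-sweep and a `T`-sweep over the same entries are the two sides of a Galois connection,
which orders `θ₁` and `θ₂`. The divisibility conditions of `𝕄` record exactly the steps that
leave an entry unchanged.
-/

namespace Serganova

variable {p n : ℕ}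

def sPairStep (p : ℕ) (a u : ℤ) : ℤ × ℤ :=
  if (p : ℤ) ∣ a + u then (a, u) else (a - 1, u + 1)

def tPairStep (p : ℕ) (a u : ℤ) : ℤ × ℤ :=
  if (p : ℤ) ∣ a + u then (a, u) else (a + 1, u - 1)

section PairStep

variable {a b u t : ℤ}

lemma tPairStep_sPairStep (a u : ℤ) :
    tPairStep p (sPairStep p a u).1 (sPairStep p a u).2 = (a, u) := by
  unfold sPairStep tPairStep
  split_ifs <;> simp_all

lemma sPairStep_tPairStep (a u : ℤ) :
    sPairStep p (tPairStep p a u).1 (tPairStep p a u).2 = (a, u) := by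
  unfold sPairStep tPairStep
  split_ifs <;> simp_all

lemma sPairStep_fst_le (a u : ℤ) : (sPairStep p a u).1 ≤ a := by
  unfold sPairStep; split_ifs <;> simp

lemma le_sPairStep_snd (a u : ℤ) : u ≤ (sPairStep p a u).2 := by
  unfold sPairStep; split_ifs <;> simp

lemma dvd_of_sPairStep_fst_eq (h : (sPairStep p a u).1 = a) :
    (p : ℤ) ∣ (sPairStep p a u).1 + (sPairStep p a u).2 := by
  unfold sPairStep at *; split_ifs at * <;> simp_all

lemma dvd_of_sPairStep_snd_eq (h : (sPairStep p a u).2 = u) :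
    (p : ℤ) ∣ (sPairStep p a u).1 + (sPairStep p a u).2 := by
  unfold sPairStep at *; split_ifs at * <;> simp_all

lemma sPairStep_fst_le_sPairStep_fst (hba : b ≤ a) :
    (sPairStep p b u).1 ≤ (sPairStep p a (sPairStep p b u).2).1 := by
  unfold sPairStep
  split_ifs with h₁ h₂ h₂ <;> simp only <;> try omega
  rcases hba.lt_or_eq with hlt | rfl
  · omega
  · exact absurd h₁ h₂

lemma tPairStep_fst_le (hba : b ≤ a) (hdvd : a = b → (p : ℤ) ∣ b + t) :
    (tPairStep p b t).1 ≤ a := by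
  unfold tPairStep
  split_ifs with h <;> simp only <;> try omega
  rcases hba.lt_or_eq with hlt | rfl
  · omega
  · exact absurd (hdvd rfl) h

lemma tPairStep_fst_le_tPairStep_fst (hba : b ≤ a) :
    (tPairStep p b (tPairStep p a t).2).1 ≤ (tPairStep p a t).1 := by
  unfold tPairStep
  split_ifs with h₁ h₂ h₂ <;> simp only <;> try omega
  rcases hba.lt_or_eq with hlt | rfl
  · omega
  · exact absurd h₁ h₂

lemma le_tPairStep_snd (hut : u ≤ t) (hdvd : t = u → (p : ℤ) ∣ a + t) :
    u ≤ (tPairStep p a t).2 := by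
  unfold tPairStep
  split_ifs with h <;> simp only <;> try omega
  rcases hut.lt_or_eq with hlt | rfl
  · omega
  · exact absurd (hdvd rfl) h

lemma gc_sPairStep_tPairStep (a : ℤ) :
    GaloisConnection (fun u => (sPairStep p a u).2) (fun t => (tPairStep p a t).2) := by
  intro u t
  simp only [sPairStep, tPairStep]
  split_ifs with h₁ h₂ h₂ <;> simp only
  all_goals constructor <;> intro h <;> try omega
  all_goals
    rcases h.lt_or_eq with hlt | rfl
    · omega
    · contradiction

end PairStep

lemma antitone_cons_iff {x : ℤ} {f : Fin n → ℤ} :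
    Antitone (Fin.cons x f : Fin (n + 1) → ℤ) ↔ Antitone f ∧ ∀ h : 0 < n, f ⟨0, h⟩ ≤ x := by
  cases n with
  | zero => simp [Subsingleton.antitone]
  | succ n => exact antitone_vecCons.trans (by simp [and_comm])

lemma antitone_tail {f : Fin (n + 1) → ℤ} (hf : Antitone f) : Antitone (Fin.tail f) :=
  hf.comp_monotone (Fin.strictMono_succ.monotone)

/-- The sweep of `S₁` along the first column: the counter `t` meets `x (n-1), …, x 0` in turn. -/
def sCol (p : ℕ) : (n : ℕ) → (Fin n → ℤ) → ℤ → (Fin n → ℤ) × ℤ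
  | 0, x, t => (x, t)
  | n + 1, x, t =>
    let q := sCol p n (Fin.tail x) t
    (Fin.cons (sPairStep p (x 0) q.2).1 q.1, (sPairStep p (x 0) q.2).2)

/-- The sweep of `T₁` along the first column: the counter `t` meets `x 0, …, x (n-1)` in turn. -/
def tCol (p : ℕ) : (n : ℕ) → (Fin n → ℤ) → ℤ → (Fin n → ℤ) × ℤ
  | 0, x, t => (x, t)
  | n + 1, x, t =>
    let r := tCol p n (Fin.tail x) (tPairStep p (x 0) t).2
    (Fin.cons (tPairStep p (x 0) t).1 r.1, r.2)

section Column

lemma tCol_sCol (x : Fin n → ℤ) (t : ℤ) :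
    tCol p n (sCol p n x t).1 (sCol p n x t).2 = (x, t) := by
  induction n with
  | zero => rfl
  | succ n ih =>
    simp only [sCol, tCol, Fin.cons_zero, Fin.tail_cons, tPairStep_sPairStep, ih,
      Fin.cons_self_tail]

lemma sCol_tCol (x : Fin n → ℤ) (t : ℤ) :
    sCol p n (tCol p n x t).1 (tCol p n x t).2 = (x, t) := by
  induction n generalizing t with
  | zero => rfl
  | succ n ih =>
    simp only [sCol, tCol, Fin.cons_zero, Fin.tail_cons, ih, sPairStep_tPairStep,
      Fin.cons_self_tail]

lemma gc_sCol_tCol (x : Fin n → ℤ) :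
    GaloisConnection (fun c => (sCol p n x c).2) (fun t => (tCol p n x t).2) := by
  induction n with
  | zero => exact GaloisConnection.id
  | succ n ih => exact (ih (Fin.tail x)).compose (gc_sPairStep_tPairStep (x 0))

lemma antitone_sCol_fst {x : Fin n → ℤ} (hx : Antitone x) (t : ℤ) :
    Antitone (sCol p n x t).1 := by
  induction n with
  | zero => exact Subsingleton.antitone _
  | succ n ih =>
    refine antitone_cons_iff.2 ⟨ih (antitone_tail hx), fun h => ?_⟩
    obtain ⟨m, rfl⟩ := Nat.exists_eq_add_of_lt h
    exact sPairStep_fst_le_sPairStep_fst (hx (Fin.zero_le 1))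

lemma antitone_tCol_fst {x : Fin n → ℤ} (hx : Antitone x) (t : ℤ) :
    Antitone (tCol p n x t).1 := by
  induction n generalizing t with
  | zero => exact Subsingleton.antitone _
  | succ n ih =>
    refine antitone_cons_iff.2 ⟨ih (antitone_tail hx) _, fun h => ?_⟩
    obtain ⟨m, rfl⟩ := Nat.exists_eq_add_of_lt h
    exact tPairStep_fst_le_tPairStep_fst (hx (Fin.zero_le 1))

end Column

section Run

variable {M : ℕ}

lemma sStep_eq (ij : Fin M × Fin (M + 1)) (s : SState M) :
    sStep p M ij s =
      (update s.1 ij.1 (sPairStep p (s.1 ij.1) (s.2 ij.2)).1,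
        update s.2 ij.2 (sPairStep p (s.1 ij.1) (s.2 ij.2)).2) := by
  unfold sStep sPairStep
  split_ifs <;> simp

lemma tStep_eq (ij : Fin M × Fin (M + 1)) (s : SState M) :
    tStep p M ij s =
      (update s.1 ij.1 (tPairStep p (s.1 ij.1) (s.2 ij.2)).1,
        update s.2 ij.2 (tPairStep p (s.1 ij.1) (s.2 ij.2)).2) := by
  unfold tStep tPairStep
  split_ifs <;> simp

lemma tStep_sStep (ij : Fin M × Fin (M + 1)) (s : SState M) :
    tStep p M ij (sStep p M ij s) = s := by
  simp [tStep_eq, sStep_eq, tPairStep_sPairStep]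

lemma sStep_tStep (ij : Fin M × Fin (M + 1)) (s : SState M) :
    sStep p M ij (tStep p M ij s) = s := by
  simp [tStep_eq, sStep_eq, sPairStep_tPairStep]

lemma tRun_reverse_sRun (l : List (Fin M × Fin (M + 1))) (s : SState M) :
    tRun p M l.reverse (sRun p M l s) = s := by
  induction l generalizing s with
  | nil => rfl
  | cons ij l ih =>
    simp only [tRun, sRun, List.reverse_cons, List.foldl_append, List.foldl_cons,
      List.foldl_nil] at ih ⊢
    rw [ih, tStep_sStep]

lemma sRun_tRun_reverse (l : List (Fin M × Fin (M + 1))) (s : SState M) :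
    sRun p M l (tRun p M l.reverse s) = s := by
  induction l generalizing s with
  | nil => rfl
  | cons ij l ih =>
    simp only [tRun, sRun, List.reverse_cons, List.foldl_append, List.foldl_cons,
      List.foldl_nil] at ih ⊢
    rw [sStep_tStep, ih]

lemma T1_S1 (s : SState M) : T1 p M (S1 p M s) = s := tRun_reverse_sRun _ s

lemma S1_T1 (s : SState M) : S1 p M (T1 p M s) = s := sRun_tRun_reverse _ s

lemma sRun_cons (ij : Fin M × Fin (M + 1)) (l : List (Fin M × Fin (M + 1))) (s : SState M) :
    sRun p M (ij :: l) s = sRun p M l (sStep p M ij s) :=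
  rfl

lemma sRun_append (l l' : List (Fin M × Fin (M + 1))) (s : SState M) :
    sRun p M (l ++ l') s = sRun p M l' (sRun p M l s) :=
  List.foldl_append ..

lemma sRun_fst_of_forall_ne {l : List (Fin M × Fin (M + 1))} {i : Fin M}
    (hl : ∀ ij ∈ l, ij.1 ≠ i) (s : SState M) : (sRun p M l s).1 i = s.1 i := by
  induction l generalizing s with
  | nil => rfl
  | cons ij l ih =>
    simp only [List.forall_mem_cons] at hl
    rw [sRun_cons, ih hl.2, sStep_eq]
    exact update_of_ne hl.1.symm ..

lemma sRun_snd_of_forall_ne {l : List (Fin M × Fin (M + 1))} {j : Fin (M + 1)}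
    (hl : ∀ ij ∈ l, ij.2 ≠ j) (s : SState M) : (sRun p M l s).2 j = s.2 j := by
  induction l generalizing s with
  | nil => rfl
  | cons ij l ih =>
    simp only [List.forall_mem_cons] at hl
    rw [sRun_cons, ih hl.2, sStep_eq]
    exact update_of_ne hl.1.symm ..

lemma sRun_map_prodMap {m : ℕ} {e : Fin m → Fin M} {f : Fin (m + 1) → Fin (M + 1)}
    (he : Injective e) (hf : Injective f) (l : List (Fin m × Fin (m + 1))) (s : SState M) :
    ((sRun p M (l.map (Prod.map e f)) s).1 ∘ e, (sRun p M (l.map (Prod.map e f)) s).2 ∘ f) =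
      sRun p m l (s.1 ∘ e, s.2 ∘ f) := by
  induction l generalizing s with
  | nil => rfl
  | cons ij l ih =>
    rw [List.map_cons, sRun_cons, sRun_cons, ih]
    congr 1
    simp only [sStep_eq, Prod.map_fst, Prod.map_snd, update_comp_eq_of_injective _ he,
      update_comp_eq_of_injective _ hf, comp_apply]

end Run

section Decomposition

/-- The pairs `(M,1), (M-1,1), …, (1,1)` of the first column, in the Version 1 order. -/
def column0 (M : ℕ) : List (Fin M × Fin (M + 1)) :=
  (List.finRange M).reverse.map fun i => (i, 0)

lemma column0_succ (n : ℕ) :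
    column0 (n + 1) = (column0 n).map (Prod.map Fin.succ Fin.castSucc) ++ [(0, 0)] := by
  simp [column0, List.finRange_succ, List.map_reverse, Prod.map]

lemma order1_succ (n : ℕ) :
    order1 (n + 1) = column0 (n + 1) ++ (order1 n).map (Prod.map Fin.succ Fin.succ) := by
  simp [order1, column0, List.finRange_succ, List.map_flatMap, List.flatMap_map, List.filter_map,
    Function.comp_def]

lemma sRun_column0 {M : ℕ} (s : SState M) :
    sRun p M (column0 M) s =
      ((sCol p M s.1 (s.2 0)).1, update s.2 0 (sCol p M s.1 (s.2 0)).2) := by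
  induction M with
  | zero => simp [column0, sRun, sCol]
  | succ n ih =>
    set q := sCol p n (Fin.tail s.1) (s.2 0)
    set D := sRun p (n + 1) ((column0 n).map (Prod.map Fin.succ Fin.castSucc)) s with hD
    have hpull := sRun_map_prodMap (p := p) (Fin.succ_injective n)
      (Fin.castSucc_injective (n + 1)) (column0 n) s
    rw [← hD, ih] at hpull
    simp only [Prod.ext_iff, comp_apply, Fin.castSucc_zero] at hpull
    have hD1 : D.1 = Fin.cons (s.1 0) q.1 := by
      ext i
      cases i using Fin.cases with
      | zero =>
        refine sRun_fst_of_forall_ne (fun ij hij => ?_) s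
        obtain ⟨ij', -, rfl⟩ := List.mem_map.1 hij
        exact Fin.succ_ne_zero _
      | succ i => exact congrFun hpull.1 i
    have hD2 : D.2 = update s.2 0 q.2 := by
      ext j
      cases j using Fin.lastCases with
      | last =>
        rw [update_of_ne (Fin.last_pos.ne')]
        refine sRun_snd_of_forall_ne (fun ij hij => ?_) s
        obtain ⟨ij', -, rfl⟩ := List.mem_map.1 hij
        exact (Fin.castSucc_lt_last _).ne
      | cast j =>
        rw [← comp_apply (f := update s.2 0 q.2), ← Fin.castSucc_zero,
          update_comp_eq_of_injective _ (Fin.castSucc_injective _)]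
        exact congrFun hpull.2 j
    rw [column0_succ, sRun_append, ← hD, sRun_cons, sStep_eq]
    simp [hD1, hD2, sCol, sRun, q]

lemma S1_succ (s : SState (n + 1)) :
    S1 p (n + 1) s =
      let c := sCol p (n + 1) s.1 (s.2 0)
      let r := S1 p n (Fin.tail c.1, Fin.tail s.2)
      (Fin.cons (c.1 0) r.1, Fin.cons c.2 r.2) := by
  extract_lets c r
  set C := sRun p (n + 1) (column0 (n + 1)) s with hC
  have hpull := sRun_map_prodMap (p := p) (Fin.succ_injective n)
    (Fin.succ_injective (n + 1)) (order1 n) C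
  have hCr : (C.1 ∘ Fin.succ, C.2 ∘ Fin.succ) = (Fin.tail c.1, Fin.tail s.2) := by
    rw [hC, sRun_column0]
    refine Prod.ext rfl (funext fun j => ?_)
    simp [Fin.tail]
  rw [hCr] at hpull
  have hfresh : ∀ ij ∈ (order1 n).map (Prod.map Fin.succ Fin.succ), ij.1 ≠ 0 ∧ ij.2 ≠ 0 := by
    intro ij hij
    obtain ⟨ij', -, rfl⟩ := List.mem_map.1 hij
    exact ⟨Fin.succ_ne_zero _, Fin.succ_ne_zero _⟩
  rw [S1, order1_succ, sRun_append, ← hC]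
  ext i
  · cases i using Fin.cases with
    | zero =>
      rw [sRun_fst_of_forall_ne (fun ij hij => (hfresh ij hij).1), hC, sRun_column0]
      rfl
    | succ i => exact congrFun (congrArg Prod.fst hpull) i
  · cases i using Fin.cases with
    | zero =>
      rw [sRun_snd_of_forall_ne (fun ij hij => (hfresh ij hij).2), hC, sRun_column0]
      simp [c]
    | succ i => exact congrFun (congrArg Prod.snd hpull) i

lemma S1_snd_zero (s : SState n) : (S1 p n s).2 0 = (sCol p n s.1 (s.2 0)).2 := by
  cases n with
  | zero => rfl
  | succ n => rw [S1_succ]; rfl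

lemma S1_fst_zero (s : SState (n + 1)) :
    (S1 p (n + 1) s).1 0 = (sCol p (n + 1) s.1 (s.2 0)).1 0 := by
  rw [S1_succ]; rfl

lemma T1_succ (s : SState (n + 1)) :
    T1 p (n + 1) s =
      let r := T1 p n (Fin.tail s.1, Fin.tail s.2)
      let c := tCol p (n + 1) (Fin.cons (s.1 0) r.1) (s.2 0)
      (c.1, Fin.cons c.2 r.2) := by
  extract_lets r c
  have hS1 : S1 p (n + 1) (c.1, Fin.cons c.2 r.2) = s := by
    rw [S1_succ]
    simp only [Fin.cons_zero, c, sCol_tCol, Fin.tail_cons, r, Prod.mk.eta, S1_T1,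
      Fin.cons_self_tail]
  rw [← hS1, T1_S1]

lemma T1_fst_zero (s : SState (n + 1)) :
    (T1 p (n + 1) s).1 0 = (tPairStep p (s.1 0) (s.2 0)).1 := by
  rw [T1_succ]; rfl

end Decomposition

lemma cons_mem_setM_iff (x t : ℤ) (u : SState n) :
    ((Fin.cons x u.1 : Fin (n + 1) → ℤ), (Fin.cons t u.2 : Fin (n + 2) → ℤ)) ∈ setM p (n + 1) ↔
      u ∈ setM p n ∧ u.2 0 ≤ t ∧ (t = u.2 0 → (p : ℤ) ∣ x + t) ∧
        ∀ h : 0 < n, u.1 ⟨0, h⟩ ≤ x ∧ (x = u.1 ⟨0, h⟩ → (p : ℤ) ∣ u.1 ⟨0, h⟩ + u.2 0) := by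
  simp only [setM, Set.mem_ofPred_eq, antitone_cons_iff]
  constructor
  · rintro ⟨⟨hx, hx0⟩, ⟨ht, ht0⟩, hL, hT⟩
    exact ⟨⟨hx, ht, fun i hi => hL (i + 1) (by omega), fun i hi => hT (i + 1) (by omega)⟩,
      ht0 n.succ_pos, hT 0 n.succ_pos, fun h => ⟨hx0 h, hL 0 (Nat.succ_lt_succ h)⟩⟩
  · rintro ⟨⟨hx, ht, hL, hT⟩, ht0, hT0, hL0⟩
    refine ⟨⟨hx, fun h => (hL0 h).1⟩, ⟨ht, fun _ => ht0⟩, fun i hi => ?_, fun i hi => ?_⟩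
    · cases i with
      | zero => exact (hL0 _).2
      | succ i => exact hL i (by omega)
    · cases i with
      | zero => exact hT0
      | succ i => exact hT i (by omega)

theorem mapsTo_S1 : Set.MapsTo (S1 p n) (domA n) (setM p n) := by
  induction n with
  | zero => exact fun s hs => ⟨hs.1, hs.2, fun i hi => by omega, fun i hi => by omega⟩
  | succ n ih =>
    rintro s ⟨hx, ht⟩
    rw [S1_succ]
    extract_lets c r
    set q := sCol p n (Fin.tail s.1) (s.2 0)
    have hcx : Antitone c.1 := antitone_sCol_fst hx _
    have hr : r ∈ setM p n := ih ⟨antitone_tail hcx, antitone_tail ht⟩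
    -- adjunction, as the inverse sweep of the first row's output recovers `θ₁ ≥ θ₂`
    have hr0 : r.2 0 ≤ q.2 := by
      rw [S1_snd_zero]
      refine (gc_sCol_tCol _).l_le ?_
      rw [show Fin.tail c.1 = q.1 from rfl, tCol_sCol]
      exact ht (Fin.zero_le _)
    have hqc : q.2 ≤ c.2 := le_sPairStep_snd _ _
    refine (cons_mem_setM_iff _ _ r).2 ⟨hr, hr0.trans hqc, fun h => ?_, fun h => ?_⟩
    · exact dvd_of_sPairStep_snd_eq (le_antisymm (h.trans_le hr0) hqc)
    · cases n with
      | zero => omega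
      | succ m =>
        show r.1 0 ≤ c.1 0 ∧ (c.1 0 = r.1 0 → (p : ℤ) ∣ r.1 0 + r.2 0)
        have hw : r.1 0 ≤ c.1 1 := by
          rw [S1_fst_zero]
          exact sPairStep_fst_le _ _
        have hc : c.1 1 ≤ c.1 0 := hcx (Fin.zero_le _)
        refine ⟨hw.trans hc, fun heq => ?_⟩
        have hw' : r.1 0 = c.1 1 := le_antisymm hw (heq ▸ hc)
        rw [S1_fst_zero] at hw' ⊢
        rw [S1_snd_zero]
        exact dvd_of_sPairStep_fst_eq hw'

theorem mapsTo_T1 : Set.MapsTo (T1 p n) (setM p n) (domA n) := by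
  induction n with
  | zero => exact fun s hs => ⟨hs.1, hs.2.1⟩
  | succ n ih =>
    intro s hs
    set u : SState n := (Fin.tail s.1, Fin.tail s.2)
    have hs' : ((Fin.cons (s.1 0) u.1 : Fin (n + 1) → ℤ), (Fin.cons (s.2 0) u.2 : Fin (n + 2) → ℤ))
        ∈ setM p (n + 1) := by
      simpa only [u, Fin.cons_self_tail] using hs
    obtain ⟨hu, ht0, hT0, hL0⟩ := (cons_mem_setM_iff _ _ u).1 hs'
    rw [T1_succ]
    extract_lets r c
    obtain ⟨hrx, hrt⟩ := ih hu
    refine ⟨antitone_tCol_fst (antitone_cons_iff.2 ⟨hrx, fun h => ?_⟩) _,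
      antitone_cons_iff.2 ⟨hrt, fun _ => ?_⟩⟩
    · cases n with
      | zero => omega
      | succ m =>
        show r.1 0 ≤ s.1 0
        rw [T1_fst_zero]
        exact tPairStep_fst_le (hL0 h).1 (hL0 h).2
    · -- adjunction, as `S₁` recovers `θ₂` from `r`
      show r.2 0 ≤ (tCol p n r.1 (tPairStep p (s.1 0) (s.2 0)).2).2
      refine (gc_sCol_tCol _).le_u ?_
      rw [← S1_snd_zero, S1_T1]
      exact le_tPairStep_snd ht0 hT0

end Serganova

theorem serganova_bijOn_general (p M : ℕ) :
    Set.BijOn (S1 p M) (domA M) (setM p M) ∧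
    Set.InvOn (T1 p M) (S1 p M) (domA M) (setM p M) := by
  have hinv : Set.InvOn (T1 p M) (S1 p M) (domA M) (setM p M) :=
    ⟨fun s _ => Serganova.T1_S1 s, fun s _ => Serganova.S1_T1 s⟩
  exact ⟨hinv.bijOn Serganova.mapsTo_S1 Serganova.mapsTo_T1, hinv⟩

/-- `S₁` restricts to a bijection from `A` onto `𝕄`, with inverse
given by the restriction of `T₁` to `𝕄`. -/
theorem serganova_bijOn (p M : ℕ) (hp : p.Prime) (hM : 1 ≤ M) :
    Set.BijOn (S1 p M) (domA M) (setM p M) ∧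
    Set.InvOn (T1 p M) (S1 p M) (domA M) (setM p M) :=
  serganova_bijOn_general p M
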